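/- arXiv:1309.3307 — 3 statements merged into one kernel-verified Lean document; each statement's English description precedes it below -/
import Mathlib

section
/- Fix a block length N ≥ 1, a crossover probability p ∈ (0,1), a number of codewords M ≥ 1, and a transmitted codeword x₁ ∈ {0,1}^N. Let Z = (Z_1,…,Z_N) have independent Bernoulli(p) coordinates, let y = x₁ ⊕ Z (coordinatewise XOR), and let X_2,…,X_M be independent random vectors, each uniformly distributed on {0,1}^N and independent of Z. Declare a decoding failure if there exists j ∈ {2,…,M} with d_H(X_j, y) ≤ d_H(x₁, y) (so ties count as failures). Then the probability of decoding failure equals ∑_{e=0}^{N} C(N,e) p^e (1−p)^{N−e} · [1 − (1 − 2^{−N} ∑_{i=0}^{e} C(N,i))^{M−1}]. -/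
/-!
Condition on the error pattern `z`, of Hamming weight `e`. The received word is then at distance
`e` from `x₁`, and decoding fails iff some of the `M - 1` independent uniform codewords lands in the
Hamming ball of radius `e` around it; that ball has `∑_{i ≤ e} C(N, i)` points, so the conditional
failure probability is `1 - (1 - 2⁻ᴺ ∑_{i ≤ e} C(N, i)) ^ (M - 1)`. Grouping the error patterns by
weight, each of the `C(N, e)` patterns of weight `e` has probability `p ^ e (1 - p) ^ (N - e)`.
Both counts come from identifying `ι → Bool` with `Finset ι` through the set of coordinates where
a word differs from a fixed centre.
-/

open Finset

section HammingCube

variable {ι : Type*} [Fintype ι]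

theorem card_filter_card_le (r : ℕ) :
    #{s : Finset ι | #s ≤ r} = ∑ i ∈ range (r + 1), (Fintype.card ι).choose i := by
  rw [card_eq_sum_card_fiberwise (f := card) (t := range (r + 1))
    (fun s hs => by simpa [Nat.lt_succ_iff] using hs)]
  refine sum_congr rfl fun i hi => ?_
  rw [← card_univ, ← card_powersetCard, powersetCard_eq_filter, powerset_univ, filter_filter]
  congr 1
  exact filter_congr fun s _ => by simp only [mem_range] at hi; constructor <;> intro h <;> omega

theorem hammingDist_self_xor (x z : ι → Bool) :
    hammingDist x (fun k => xor (x k) (z k)) = hammingNorm z := by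
  unfold hammingDist hammingNorm
  congr 1
  ext k
  simp only [mem_filter, mem_univ, true_and]
  cases x k <;> cases z k <;> simp [show (0 : Bool) = false from rfl]

variable [DecidableEq ι]

def diffFinsetEquiv (y : ι → Bool) : (ι → Bool) ≃ Finset ι where
  toFun v := {k | v k ≠ y k}
  invFun s k := xor (decide (k ∈ s)) (y k)
  left_inv v := by funext k; cases hv : v k <;> cases hy : y k <;> simp [hv, hy]
  right_inv s := by ext k; cases hy : y k <;> simp [hy]

theorem hammingDist_eq_card_diffFinsetEquiv (v y : ι → Bool) :
    hammingDist v y = #(diffFinsetEquiv y v) := rfl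

theorem hammingNorm_eq_card_diffFinsetEquiv (z : ι → Bool) :
    hammingNorm z = #(diffFinsetEquiv 0 z) := rfl

theorem card_filter_hammingDist_le (y : ι → Bool) (r : ℕ) :
    #{v : ι → Bool | hammingDist v y ≤ r} = ∑ i ∈ range (r + 1), (Fintype.card ι).choose i := by
  rw [← card_filter_card_le]
  exact card_equiv (diffFinsetEquiv y) fun v => by
    rw [mem_filter_univ, mem_filter_univ, hammingDist_eq_card_diffFinsetEquiv]

variable {R : Type*} [CommSemiring R]

theorem prod_ite_mem_eq_pow_mul_pow (s : Finset ι) (p q : R) :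
    ∏ k, (if k ∈ s then p else q) = p ^ #s * q ^ (Fintype.card ι - #s) := by
  rw [prod_ite, prod_const, prod_const, filter_mem_eq_inter, univ_inter, filter_not,
    filter_mem_eq_inter, univ_inter, card_sdiff_of_subset (subset_univ s), card_univ]

theorem sum_prod_ite_mul_hammingNorm (p q : R) (g : ℕ → R) :
    ∑ z : ι → Bool, (∏ k, if z k then p else q) * g (hammingNorm z) =
      ∑ e ∈ range (Fintype.card ι + 1),
        (Fintype.card ι).choose e * p ^ e * q ^ (Fintype.card ι - e) * g e := by
  rw [Fintype.sum_equiv (diffFinsetEquiv 0) _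
    (fun s => p ^ #s * q ^ (Fintype.card ι - #s) * g #s), ← powerset_univ,
    sum_powerset_apply_card (fun e => p ^ e * q ^ (Fintype.card ι - e) * g e), card_univ]
  · simp only [nsmul_eq_mul, mul_assoc]
  · intro z
    rw [hammingNorm_eq_card_diffFinsetEquiv, ← prod_ite_mem_eq_pow_mul_pow]
    congr 1
    refine prod_congr rfl fun k _ => ?_
    cases h : z k <;> simp [diffFinsetEquiv, h]

end HammingCube

theorem inv_card_pow_mul_card_filter_exists_mem {κ α K : Type*} [Fintype κ] [DecidableEq κ]
    [Fintype α] [DecidableEq α] [Nonempty α] [Field K] [CharZero K] (S : Finset α) :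
    ((Fintype.card α : K)⁻¹) ^ Fintype.card κ * #{xs : κ → α | ∃ j, xs j ∈ S} =
      1 - (1 - (Fintype.card α : K)⁻¹ * #S) ^ Fintype.card κ := by
  have hmiss : #{xs : κ → α | ¬∃ j, xs j ∈ S} = #Sᶜ ^ Fintype.card κ := by
    rw [← card_univ (α := κ), ← prod_const, ← Fintype.card_piFinset (fun _ : κ => Sᶜ)]
    congr 1
    ext xs
    simp [Fintype.mem_piFinset]
  have hsplit := card_filter_add_card_filter_not (s := (univ : Finset (κ → α)))
    (fun xs => ∃ j, xs j ∈ S)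
  rw [hmiss, card_univ, Fintype.card_fun, card_compl] at hsplit
  have hcast := congrArg (Nat.cast (R := K)) hsplit
  push_cast [Nat.cast_sub (card_le_univ S)] at hcast
  have hα : (Fintype.card α : K) ≠ 0 := Nat.cast_ne_zero.mpr Fintype.card_ne_zero
  rw [← eq_sub_iff_add_eq] at hcast
  rw [hcast, mul_sub, ← mul_pow, inv_mul_cancel₀ hα, one_pow, ← mul_pow, mul_sub,
    inv_mul_cancel₀ hα]

theorem stmt_0_general (N M : ℕ) (p : ℝ) (x₁ : Fin N → Bool) :
    (∑ z : Fin N → Bool, ∑ xs : Fin (M - 1) → Fin N → Bool,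
      ((∏ k : Fin N, if z k then p else 1 - p) * ((2 ^ N : ℝ)⁻¹) ^ (M - 1)) *
        (if ∃ j : Fin (M - 1),
            hammingDist (xs j) (fun k => xor (x₁ k) (z k)) ≤
              hammingDist x₁ (fun k => xor (x₁ k) (z k)) then 1 else 0))
    = ∑ e ∈ Finset.range (N + 1),
        (N.choose e : ℝ) * p ^ e * (1 - p) ^ (N - e) *
          (1 - (1 - (2 ^ N : ℝ)⁻¹ *
            ∑ i ∈ Finset.range (e + 1), (N.choose i : ℝ)) ^ (M - 1)) := by
  have failure_given_error (z : Fin N → Bool) :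
      ∑ xs : Fin (M - 1) → Fin N → Bool,
        ((∏ k : Fin N, if z k then p else 1 - p) * ((2 ^ N : ℝ)⁻¹) ^ (M - 1)) *
          (if ∃ j : Fin (M - 1), hammingDist (xs j) (fun k => xor (x₁ k) (z k)) ≤
              hammingDist x₁ (fun k => xor (x₁ k) (z k)) then 1 else 0) =
        (∏ k : Fin N, if z k then p else 1 - p) *
          (1 - (1 - (2 ^ N : ℝ)⁻¹ *
            ∑ i ∈ range (hammingNorm z + 1), (N.choose i : ℝ)) ^ (M - 1)) := by
    have ball := inv_card_pow_mul_card_filter_exists_mem (κ := Fin (M - 1))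
      (α := Fin N → Bool) (K := ℝ)
      {v : Fin N → Bool | hammingDist v (fun k => xor (x₁ k) (z k)) ≤ hammingNorm z}
    simp only [mem_filter_univ, card_filter_hammingDist_le, Fintype.card_fin, Fintype.card_fun,
      Fintype.card_bool, Nat.cast_pow, Nat.cast_sum, Nat.cast_ofNat] at ball
    rw [← mul_sum, sum_boole, mul_assoc, hammingDist_self_xor, ball]
  simp_rw [failure_given_error]
  simpa using sum_prod_ite_mul_hammingNorm (ι := Fin N) p (1 - p)
    (fun e => 1 - (1 - (2 ^ N : ℝ)⁻¹ * ∑ i ∈ range (e + 1), (N.choose i : ℝ)) ^ (M - 1))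

/-- failure probability of ML (minimum-distance) decoding of a
random code with `M` codewords over `BSC(p)`, ties counted as failures.
The sample space consists of the error pattern `z` (independent `Bernoulli p`
coordinates) together with the `M - 1` other codewords `xs` (independent,
uniform on `{0,1}^N`); the received word is `y = x₁ ⊕ z`. -/
theorem stmt_0 (N M : ℕ) (hN : 1 ≤ N) (hM : 1 ≤ M) (p : ℝ) (hp0 : 0 < p) (hp1 : p < 1)
    (x₁ : Fin N → Bool) :
    (∑ z : Fin N → Bool, ∑ xs : Fin (M - 1) → Fin N → Bool,
      ((∏ k : Fin N, if z k then p else 1 - p) * ((2 ^ N : ℝ)⁻¹) ^ (M - 1)) *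
        (if ∃ j : Fin (M - 1),
            hammingDist (xs j) (fun k => xor (x₁ k) (z k)) ≤
              hammingDist x₁ (fun k => xor (x₁ k) (z k)) then 1 else 0))
    = ∑ e ∈ Finset.range (N + 1),
        (N.choose e : ℝ) * p ^ e * (1 - p) ^ (N - e) *
          (1 - (1 - (2 ^ N : ℝ)⁻¹ *
            ∑ i ∈ Finset.range (e + 1), (N.choose i : ℝ)) ^ (M - 1)) :=
  stmt_0_general N M p x₁
end

section
/- Fix N ≥ 1, M ≥ 2, an integer safety margin ν ≥ 0, a transmitted codeword X_1 = x₁ ∈ {0,1}^N and a received vector y ∈ {0,1}^N with d_H(x₁, y) = e, where e ≥ ν + 1. Let X_2,…,X_M be independent, each uniform on {0,1}^N. Let B = min_{1 ≤ j ≤ M} d_H(X_j, y), and say an undetected failure occurs if there is an index ĵ with d_H(X_{ĵ}, y) = B, X_{ĵ} ≠ x₁, and every index k with X_k ≠ X_{ĵ} satisfies d_H(X_k, y) > B + ν (so the decoder outputs the wrong codeword X_{ĵ}). Then an undetected failure implies that some j ∈ {2,…,M} satisfies d_H(X_j, y) ≤ e − ν − 1, and consequently the probability of undetected failure is at most 1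 − (1 − 2^{−N} ∑_{i=0}^{e−ν−1} C(N,i))^{M−1}. -/
/-!
If the decoder outputs a wrong codeword `xs j`, the margin condition tested against the
transmitted `x₁` gives `d(xs j, y) + ν < d(x₁, y) = e`, so `xs j` lies in the Hamming ball of
radius `e - ν - 1` around `y`. The ball has `∑_{i ≤ e-ν-1} C(N,i)` points, and a uniform
`(M-1)`-tuple misses a set of density `p` with probability `(1 - p)^(M-1)`.
-/

open scoped Classical

/-- The full family of codewords: index `none` is the transmitted codeword
`x₁`, index `some j` is the `j`-th of the `M - 1` random codewords. -/
def Xfam {N K : ℕ} (x₁ : Fin N → Bool) (xs : Fin K → Fin N → Bool) :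
    Option (Fin K) → Fin N → Bool := fun i => i.elim x₁ xs

/-- Undetected failure of the margin-`ν` decoder: some codeword `X_jhat` attains
the minimum distance `B` to `y`, differs from the transmitted codeword `x₁`,
and every codeword different from `X_jhat` is at distance `> B + ν`, so the
decoder outputs the wrong codeword `X_jhat`. -/
def Undet {N K : ℕ} (x₁ y : Fin N → Bool) (ν : ℕ)
    (xs : Fin K → Fin N → Bool) : Prop :=
  ∃ jhat : Option (Fin K),
    (∀ k : Option (Fin K),
      hammingDist (Xfam x₁ xs jhat) y ≤ hammingDist (Xfam x₁ xs k) y) ∧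
    Xfam x₁ xs jhat ≠ x₁ ∧
    ∀ k : Option (Fin K), Xfam x₁ xs k ≠ Xfam x₁ xs jhat →
      hammingDist (Xfam x₁ xs jhat) y + ν < hammingDist (Xfam x₁ xs k) y

open Finset

section HammingBall

variable {ι : Type*} [Fintype ι] [DecidableEq ι]

theorem card_hammingDist_eq (y : ι → Bool) (i : ℕ) :
    #{x : ι → Bool | hammingDist x y = i} = (Fintype.card ι).choose i := by
  rw [← card_univ, ← card_powersetCard]
  refine card_bij' (fun x _ => ({j | x j ≠ y j} : Finset ι))
    (fun s _ j => xor (decide (j ∈ s)) (y j)) ?_ ?_ ?_ ?_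
  · intro x hx
    simpa [mem_powersetCard, hammingDist] using hx
  · intro s hs
    rw [mem_powersetCard] at hs
    simp only [mem_filter, mem_univ, true_and, hammingDist, ← hs.2]
    congr 1
    ext j
    by_cases hj : j ∈ s <;> simp [hj]
  · intro x _
    funext j
    cases hx : x j <;> cases hy : y j <;> simp [hx, hy]
  · intro s _
    ext j
    by_cases hj : j ∈ s <;> simp [hj]

theorem card_hammingDist_le (y : ι → Bool) (t : ℕ) :
    #{x : ι → Bool | hammingDist x y ≤ t}
      = ∑ i ∈ range (t + 1), (Fintype.card ι).choose i := by
  rw [card_eq_sum_card_fiberwise (f := fun x => hammingDist x y) (t := range (t + 1))]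
  · refine sum_congr rfl fun i hi => ?_
    rw [filter_filter, ← card_hammingDist_eq y i]
    congr 1
    ext x
    simp only [mem_filter, mem_univ, true_and, mem_range] at hi ⊢
    omega
  · intro x hx
    simp at hx ⊢
    omega

end HammingBall

section Uniform

variable {ι α : Type*} [Fintype ι] [DecidableEq ι] [Fintype α] [DecidableEq α]

theorem card_filter_exists_mem (S : Finset α) :
    #{xs : ι → α | ∃ i, xs i ∈ S}
      = Fintype.card α ^ Fintype.card ι - (Fintype.card α - #S) ^ Fintype.card ι := by
  have hnone :
      #{xs : ι → α | ¬ ∃ i, xs i ∈ S} = (Fintype.card α - #S) ^ Fintype.card ι := by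
    have hpi : ({xs : ι → α | ¬ ∃ i, xs i ∈ S} : Finset (ι → α))
        = Fintype.piFinset fun _ => Sᶜ := by
      ext xs
      simp [Fintype.mem_piFinset]
    rw [hpi, Fintype.card_piFinset, prod_const, card_univ, card_compl]
  have hsplit := card_filter_add_card_filter_not (s := (univ : Finset (ι → α)))
    (fun xs => ∃ i, xs i ∈ S)
  rw [hnone, card_univ, Fintype.card_fun] at hsplit
  omega

theorem inv_pow_mul_card_filter_exists_mem [Nonempty α] (S : Finset α) :
    ((Fintype.card α : ℝ)⁻¹) ^ Fintype.card ι * #{xs : ι → α | ∃ i, xs i ∈ S}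
      = 1 - (1 - (Fintype.card α : ℝ)⁻¹ * #S) ^ Fintype.card ι := by
  have hα : (Fintype.card α : ℝ) ≠ 0 := by positivity
  have hS : #S ≤ Fintype.card α := card_le_univ S
  rw [card_filter_exists_mem]
  push_cast [Nat.pow_le_pow_left (Nat.sub_le _ _), hS]
  rw [mul_sub, ← mul_pow, inv_mul_cancel₀ hα, one_pow, ← mul_pow, mul_sub,
    inv_mul_cancel₀ hα]

end Uniform

theorem Undet.exists_hammingDist_add_lt {N K : ℕ} {x₁ y : Fin N → Bool} {ν : ℕ}
    {xs : Fin K → Fin N → Bool} (h : Undet x₁ y ν xs) :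
    ∃ j, hammingDist (xs j) y + ν < hammingDist x₁ y := by
  obtain ⟨jhat, -, hne, hfar⟩ := h
  cases jhat with
  | none => exact absurd rfl hne
  | some j => exact ⟨j, hfar none (Ne.symm hne)⟩

theorem stmt_13_general (N M ν : ℕ) (x₁ y : Fin N → Bool)
    (e : ℕ) (he : hammingDist x₁ y = e) :
    (∀ xs : Fin (M - 1) → Fin N → Bool,
      Undet x₁ y ν xs → ∃ j : Fin (M - 1), hammingDist (xs j) y ≤ e - ν - 1)
    ∧
    (∑ xs : Fin (M - 1) → Fin N → Bool,
      ((2 ^ N : ℝ)⁻¹) ^ (M - 1) * (if Undet x₁ y ν xs then 1 else 0))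
    ≤ 1 - (1 - (2 ^ N : ℝ)⁻¹ *
        ∑ i ∈ Finset.range (e - ν - 1 + 1), (N.choose i : ℝ)) ^ (M - 1) := by
  have close (xs : Fin (M - 1) → Fin N → Bool) (h : Undet x₁ y ν xs) :
      ∃ j, hammingDist (xs j) y ≤ e - ν - 1 := by
    obtain ⟨j, hj⟩ := h.exists_hammingDist_add_lt
    exact ⟨j, by omega⟩
  refine ⟨close, ?_⟩
  have hball : (∑ i ∈ range (e - ν - 1 + 1), (N.choose i : ℝ))
      = #{x : Fin N → Bool | hammingDist x y ≤ e - ν - 1} := by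
    simp only [card_hammingDist_le, Fintype.card_fin, Nat.cast_sum]
  have key := inv_pow_mul_card_filter_exists_mem (ι := Fin (M - 1))
    {x : Fin N → Bool | hammingDist x y ≤ e - ν - 1}
  simp only [Fintype.card_fun, Fintype.card_bool, Fintype.card_fin, Nat.cast_pow,
    Nat.cast_ofNat, mem_filter, mem_univ, true_and] at key
  rw [← mul_sum, sum_boole, hball, ← key]
  gcongr with xs
  exact close xs

/-- given `d_H(x₁,y) = e ≥ ν + 1`, an undetected failure of the
margin-`ν` decoder implies that some other codeword lies within distance
`e - ν - 1` of `y`; consequently the probability of undetected failure (over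
the `M - 1` independent uniform codewords) is at most
`1 - (1 - 2^{-N} ∑_{i=0}^{e-ν-1} C(N,i))^{M-1}`. -/
theorem stmt_13 (N M ν : ℕ) (hN : 1 ≤ N) (hM : 2 ≤ M) (x₁ y : Fin N → Bool)
    (e : ℕ) (he : hammingDist x₁ y = e) (heν : ν + 1 ≤ e) :
    (∀ xs : Fin (M - 1) → Fin N → Bool,
      Undet x₁ y ν xs → ∃ j : Fin (M - 1), hammingDist (xs j) y ≤ e - ν - 1)
    ∧
    (∑ xs : Fin (M - 1) → Fin N → Bool,
      ((2 ^ N : ℝ)⁻¹) ^ (M - 1) * (if Undet x₁ y ν xs then 1 else 0))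
    ≤ 1 - (1 - (2 ^ N : ℝ)⁻¹ *
        ∑ i ∈ Finset.range (e - ν - 1 + 1), (N.choose i : ℝ)) ^ (M - 1) :=
  stmt_13_general N M ν x₁ y e he
end

section
/- Let C ⊆ {0,1}^N be a set of binary codewords containing the zero vector, such that any two distinct codewords are at Hamming distance at least 2t+1 for some integer t ≥ 0, and let ν be an integer with 0 ≤ ν ≤ t. For each l, let A_l denote the number of codewords of Hamming weight l. Then for every integer e with e ≥ t + ν + 1, the number of vectors y ∈ {0,1}^N with wt(y) = e for which there exists a nonzero codeword c ∈ C with d_H(c, y) ≤ t − ν equals ∑_{j=0}^{t−ν} ∑_{l} A_l · n(l, e, j), where n(l, e, j) = C(N−l, (j+e−l)/2)·C(l, (j+l−e)/2) when j+e−l is even and the arguments are within range, and n(l, e, j) = 0 otherwise. (The key point is that the Hamming balls of radius t − ν around distinct codewords are pairwise disjoint, and y cannot lie within distance t − ν of the zero codeword, so the count decomposes as a sum over nonzero codewords.) -/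
/-!
A word `y` is recovered from a word `c` of weight `l` by the set `A` of zeros of `c` that `y`
turns into ones and the set `B` of ones of `c` that it turns into zeros. Since
`d(c, y) = |A| + |B|` and `wt y = l + |A| - |B|`, the weight-`e` words at distance `j` from `c`
correspond to pairs with `|A| = (j + e - l) / 2` and `|B| = (j + l - e) / 2`, whence `n(l, e, j)`.
Balls of radius `t - ν ≤ t` around distinct codewords are disjoint, and the ball around the zero
word contains no word of weight `e > t - ν`, so the count is the sum of these sphere counts over
all codewords, grouped by weight.
-/

open scoped Classical

/-- `wt x` is the Hamming weight of `x` (the number of `true` coordinates). -/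
def wt {N : ℕ} (x : Fin N → Bool) : ℕ :=
  (Finset.univ.filter fun k => x k = true).card

/-- `nlej N l e j` is the number of weight-`e` vectors in `{0,1}^N` at Hamming
distance `j` from a fixed weight-`l` vector:
`C(N-l, (j+e-l)/2) · C(l, (j+l-e)/2)` when `j+e-l` is even and the arguments
are within range, and `0` otherwise. -/
def nlej (N l e j : ℕ) : ℕ :=
  if Even ((j : ℤ) + e - l) ∧ 0 ≤ (j : ℤ) + e - l ∧ 0 ≤ (j : ℤ) + l - e ∧
      ((j : ℤ) + e - l) / 2 ≤ (N : ℤ) - l ∧ ((j : ℤ) + l - e) / 2 ≤ (l : ℤ) then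
    (N - l).choose (((j : ℤ) + e - l) / 2).toNat *
      l.choose (((j : ℤ) + l - e) / 2).toNat
  else 0

open Finset

-- The range conditions in `nlej` are harmless: outside them a binomial coefficient vanishes.
lemma nlej_of_add_eq {N l e j a b : ℕ} (hl : l ≤ N) (hj : a + b = j) (he : l + a = e + b) :
    nlej N l e j = (N - l).choose a * l.choose b := by
  have ha : (j : ℤ) + e - l = 2 * a := by omega
  have hb : (j : ℤ) + l - e = 2 * b := by omega
  rw [nlej, ha, hb]
  simp only [Int.mul_ediv_cancel_left _ two_ne_zero, Int.toNat_natCast]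
  split_ifs with hcond
  · rfl
  · have : ¬ (a ≤ N - l ∧ b ≤ l) := fun h => hcond ⟨even_two_mul _, by omega⟩
    rcases not_and_or.mp this with hal | hbl
    · rw [Nat.choose_eq_zero_of_lt (show N - l < a by omega), zero_mul]
    · rw [Nat.choose_eq_zero_of_lt (show l < b by omega), mul_zero]

lemma nlej_eq_zero {N l e j : ℕ} (h : ¬ ∃ a b, a + b = j ∧ l + a = e + b) :
    nlej N l e j = 0 := by
  rw [nlej, if_neg]
  rintro ⟨⟨m, hm⟩, h1, h2, -⟩
  exact h ⟨m.toNat, j - m.toNat, by omega, by omega⟩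

section HammingSpheres

variable {N : ℕ}

def upFlips (c y : Fin N → Bool) : Finset (Fin N) := {k | c k = false ∧ y k = true}

def downFlips (c y : Fin N → Bool) : Finset (Fin N) := {k | c k = true ∧ y k = false}

def applyFlips (c : Fin N → Bool) (A B : Finset (Fin N)) : Fin N → Bool :=
  fun k => if c k then decide (k ∉ B) else decide (k ∈ A)

lemma wt_add_card_downFlips (c y : Fin N → Bool) :
    wt y + #(downFlips c y) = wt c + #(upFlips c y) := by
  simp only [wt, upFlips, downFlips, card_filter, ← sum_add_distrib]
  exact sum_congr rfl fun k _ => by cases c k <;> cases y k <;> rfl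

lemma hammingDist_eq_card_upFlips_add_card_downFlips (c y : Fin N → Bool) :
    hammingDist c y = #(upFlips c y) + #(downFlips c y) := by
  simp only [hammingDist, upFlips, downFlips, card_filter, ← sum_add_distrib]
  exact sum_congr rfl fun k _ => by cases c k <;> cases y k <;> rfl

lemma wt_le (c : Fin N → Bool) : wt c ≤ N :=
  (card_filter_le _ _).trans_eq (by simp)

lemma card_filter_eq_false (c : Fin N → Bool) : #{k | c k = false} = N - wt c := by
  have h := card_filter_add_card_filter_not (s := univ) (p := fun k => c k = true)
  simp only [Bool.not_eq_true, card_univ, Fintype.card_fin] at h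
  rw [wt]; omega

lemma upFlips_applyFlips {c : Fin N → Bool} {A B : Finset (Fin N)}
    (hA : A ⊆ ({k | c k = false} : Finset (Fin N))) : upFlips c (applyFlips c A B) = A := by
  ext k
  have := @hA k
  cases h : c k <;> simp_all [upFlips, applyFlips]

lemma downFlips_applyFlips {c : Fin N → Bool} {A B : Finset (Fin N)}
    (hB : B ⊆ ({k | c k = true} : Finset (Fin N))) : downFlips c (applyFlips c A B) = B := by
  ext k
  have := @hB k
  cases h : c k <;> simp_all [downFlips, applyFlips]

lemma applyFlips_upFlips_downFlips (c y : Fin N → Bool) :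
    applyFlips c (upFlips c y) (downFlips c y) = y := by
  funext k
  cases h : c k <;> cases hy : y k <;> simp [applyFlips, upFlips, downFlips, h, hy]

lemma card_filter_card_upFlips_card_downFlips (c : Fin N → Bool) (a b : ℕ) :
    #{y | #(upFlips c y) = a ∧ #(downFlips c y) = b} =
      (N - wt c).choose a * (wt c).choose b := by
  rw [← card_filter_eq_false, wt, ← card_powersetCard, ← card_powersetCard, ← card_product]
  refine card_nbij' (fun y => (upFlips c y, downFlips c y)) (fun p => applyFlips c p.1 p.2)
    ?_ ?_ (fun y _ => applyFlips_upFlips_downFlips c y) ?_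
  · intro y hy
    rw [mem_coe, mem_filter] at hy
    simp only [coe_product, Set.mem_prod, mem_coe, mem_powersetCard, hy.2, and_true]
    constructor <;> intro k <;> simp +contextual [upFlips, downFlips]
  · rintro ⟨A, B⟩ h
    simp only [coe_product, Set.mem_prod, mem_coe, mem_powersetCard] at h
    simp [upFlips_applyFlips h.1.1, downFlips_applyFlips h.2.1, h.1.2, h.2.2]
  · rintro ⟨A, B⟩ h
    simp only [coe_product, Set.mem_prod, mem_coe, mem_powersetCard] at h
    simp [upFlips_applyFlips h.1.1, downFlips_applyFlips h.2.1]

lemma card_filter_wt_eq_hammingDist_eq (c : Fin N → Bool) (e j : ℕ) :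
    #{y | wt y = e ∧ hammingDist c y = j} = nlej N (wt c) e j := by
  by_cases h : ∃ a b, a + b = j ∧ wt c + a = e + b
  · obtain ⟨a, b, hj, he⟩ := h
    rw [nlej_of_add_eq (wt_le c) hj he, ← card_filter_card_upFlips_card_downFlips]
    refine congrArg card (filter_congr fun y _ => ?_)
    have hwt := wt_add_card_downFlips c y
    have hdist := hammingDist_eq_card_upFlips_add_card_downFlips c y
    constructor <;> intro <;> omega
  · rw [nlej_eq_zero h, card_eq_zero, filter_eq_empty_iff]
    rintro y - ⟨rfl, rfl⟩
    exact h ⟨_, _, (hammingDist_eq_card_upFlips_add_card_downFlips c y).symm,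
      (wt_add_card_downFlips c y).symm⟩

lemma card_filter_wt_eq_hammingDist_le (c : Fin N → Bool) (e r : ℕ) :
    #{y | wt y = e ∧ hammingDist c y ≤ r} = ∑ j ∈ range (r + 1), nlej N (wt c) e j := by
  rw [card_eq_sum_card_fiberwise (f := hammingDist c) (t := range (r + 1))]
  · refine sum_congr rfl fun j hj => ?_
    rw [filter_filter, ← card_filter_wt_eq_hammingDist_eq]
    refine congrArg card (filter_congr fun y _ => ?_)
    rw [mem_range] at hj
    constructor
    · rintro ⟨⟨hy, -⟩, hd⟩; exact ⟨hy, hd⟩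
    · rintro ⟨hy, hd⟩; exact ⟨⟨hy, by omega⟩, hd⟩
  · intro y hy
    rw [mem_coe, mem_filter] at hy
    rw [mem_coe, mem_range]
    omega

lemma hammingDist_false_left (y : Fin N → Bool) : hammingDist (fun _ => false) y = wt y := by
  simp [hammingDist, wt]

lemma sum_comp_wt {M : Type*} [AddCommMonoid M] (C : Finset (Fin N → Bool)) (f : ℕ → M) :
    ∑ c ∈ C, f (wt c) = ∑ l ∈ range (N + 1), #{c ∈ C | wt c = l} • f l := by
  rw [← sum_fiberwise_of_maps_to' (t := range (N + 1))
    fun c _ => mem_range.2 (Nat.lt_succ_of_le (wt_le c))]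
  simp only [sum_const]

end HammingSpheres

theorem stmt_17_general (N t ν : ℕ) (C : Finset (Fin N → Bool))
    (hdist : ∀ c ∈ C, ∀ c' ∈ C, c ≠ c' → 2 * t + 1 ≤ hammingDist c c')
    (e : ℕ) (he : t + ν + 1 ≤ e) :
    (Finset.univ.filter fun y : Fin N → Bool =>
        wt y = e ∧ ∃ c ∈ C, c ≠ (fun _ => false) ∧ hammingDist c y ≤ t - ν).card
    = ∑ j ∈ Finset.range (t - ν + 1), ∑ l ∈ Finset.range (N + 1),
        (C.filter fun c => wt c = l).card * nlej N l e j := by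
  have hunion : ({y | wt y = e ∧ ∃ c ∈ C, c ≠ (fun _ => false) ∧ hammingDist c y ≤ t - ν} :
      Finset (Fin N → Bool)) = C.biUnion fun c => {y | wt y = e ∧ hammingDist c y ≤ t - ν} := by
    ext y
    simp only [mem_filter, mem_biUnion, mem_univ, true_and]
    constructor
    · rintro ⟨hy, c, hc, -, hd⟩
      exact ⟨c, hc, hy, hd⟩
    · rintro ⟨c, hc, hy, hd⟩
      refine ⟨hy, c, hc, ?_, hd⟩
      rintro rfl
      rw [hammingDist_false_left] at hd
      omega
  have hdisj : (C : Set (Fin N → Bool)).PairwiseDisjoint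
      fun c => ({y | wt y = e ∧ hammingDist c y ≤ t - ν} : Finset (Fin N → Bool)) := by
    intro c hc c' hc' hne
    refine disjoint_filter.2 fun y _ hy hy' => ?_
    have hcc' := hdist c hc c' hc' hne
    have htri := (hammingDist_triangle c y c').trans_eq (congrArg _ (hammingDist_comm y c'))
    omega
  rw [hunion, card_biUnion hdisj, sum_congr rfl fun c _ => card_filter_wt_eq_hammingDist_le c e _,
    sum_comm]
  exact sum_congr rfl fun j _ => sum_comp_wt C (nlej N · e j)

/-- for a code `C ⊆ {0,1}^N` containing the zero codeword with
pairwise Hamming distances at least `2t+1`, a margin `0 ≤ ν ≤ t`, weight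
distribution `A_l = #{c ∈ C : wt c = l}`, and any weight `e ≥ t + ν + 1`, the
number of weight-`e` vectors lying within distance `t - ν` of some nonzero
codeword equals `∑_{j=0}^{t-ν} ∑_l A_l · n(l,e,j)` (the balls of radius
`t - ν` around distinct codewords are pairwise disjoint, and such a `y`
cannot lie near the zero codeword). -/
theorem stmt_17 (N t ν : ℕ) (hν : ν ≤ t) (C : Finset (Fin N → Bool))
    (hzero : (fun _ => false) ∈ C)
    (hdist : ∀ c ∈ C, ∀ c' ∈ C, c ≠ c' → 2 * t + 1 ≤ hammingDist c c')
    (e : ℕ) (he : t + ν + 1 ≤ e) :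
    (Finset.univ.filter fun y : Fin N → Bool =>
        wt y = e ∧ ∃ c ∈ C, c ≠ (fun _ => false) ∧ hammingDist c y ≤ t - ν).card
    = ∑ j ∈ Finset.range (t - ν + 1), ∑ l ∈ Finset.range (N + 1),
        (C.filter fun c => wt c = l).card * nlej N l e j :=
  stmt_17_general N t ν C hdist e he
end
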